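/- If Σ is the set of principal formulas of all (□L) rules in a GLS_seq-proof P, then for every subproof P' of P: if the conclusion of P' is a first-level sequent Γ ⇒ Δ, then Γ ⇒ Δ is true at every world of every GL-model; and if the conclusion of P' is a second-level sequent Γ ⇛ Δ, then Γ ⇛ Δ is true at every Σ-reflexive world of every GL-model. -/
import Mathlib


/-- Modal formulas: propositional variables, ⊥, →, □. -/
inductive Formula : Type
  | var : ℕ → Formula
  | bot : Formula
  | imp : Formula → Formula → Formula
  | box : Formula → Formula
deriving DecidableEq

/-- Levels of sequents in GLS_seq: first level (⇒) and second level (⇛). -/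
inductive SeqLevel : Type
  | one
  | two
deriving DecidableEq

/-- The set of subformulas of a formula. -/
def Formula.subf : Formula → Finset Formula
  | .var p => {.var p}
  | .bot => {.bot}
  | .imp φ ψ => insert (.imp φ ψ) (φ.subf ∪ ψ.subf)
  | .box φ => insert (.box φ) φ.subf

/-- SF(Ψ,Φ): all subformulas of formulas in Ψ ∪ Φ. -/
def SF (Ψ Φ : Finset Formula) : Finset Formula := (Ψ ∪ Φ).biUnion Formula.subf

def Formula.isBox : Formula → Bool
  | .box _ => true
  | _ => false

def Formula.unbox : Formula → Formula
  | .box φ => φ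
  | φ => φ

/-- Θ_□ = {φ : □φ ∈ Θ}. -/
def boxInv (Θ : Finset Formula) : Finset Formula :=
  (Θ.filter fun ψ => ψ.isBox).image Formula.unbox

/-- The sequent calculus GLS_seq, on sequents of two levels.  The Bool parameter
records whether the cut rule may be used: `GLSSeq true` is provability in GLS_seq,
`GLSSeq false` is cut-free provability.  The first-level fragment is exactly GL_seq. -/
inductive GLSSeq : Bool → SeqLevel → Finset Formula → Finset Formula → Prop
  | init (c lv φ) : GLSSeq c lv {φ} {φ}
  | initBot (c lv) : GLSSeq c lv {Formula.bot} ∅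
  | cut {lv Γ Δ} (φ) : GLSSeq true lv Γ (insert φ Δ) → GLSSeq true lv (insert φ Γ) Δ →
      GLSSeq true lv Γ Δ
  | weak {c lv Γ Δ Γ' Δ'} : Γ ⊆ Γ' → Δ ⊆ Δ' → GLSSeq c lv Γ Δ → GLSSeq c lv Γ' Δ'
  | impL {c lv Γ Δ φ ψ} : GLSSeq c lv Γ (insert φ Δ) → GLSSeq c lv (insert ψ Γ) Δ →
      GLSSeq c lv (insert (.imp φ ψ) Γ) Δ
  | impR {c lv Γ Δ φ ψ} : GLSSeq c lv (insert φ Γ) (insert ψ Δ) →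
      GLSSeq c lv Γ (insert (.imp φ ψ) Δ)
  | boxGL {c Γ φ} : GLSSeq c .one (Γ ∪ Γ.image .box ∪ {.box φ}) {φ} →
      GLSSeq c .one (Γ.image .box) {.box φ}
  | boxL {c Γ Δ} (φ) : GLSSeq c .two (insert φ Γ) Δ → GLSSeq c .two (insert (.box φ) Γ) Δ
  | lift {c Γ Δ} : GLSSeq c .one Γ Δ → GLSSeq c .two Γ Δ

/-- The sequent calculus GL_seq (on first-level sequents only). -/
inductive GLSeq : Bool → Finset Formula → Finset Formula → Prop
  | init (c φ) : GLSeq c {φ} {φ}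
  | initBot (c) : GLSeq c {Formula.bot} ∅
  | cut {Γ Δ} (φ) : GLSeq true Γ (insert φ Δ) → GLSeq true (insert φ Γ) Δ → GLSeq true Γ Δ
  | weak {c Γ Δ Γ' Δ'} : Γ ⊆ Γ' → Δ ⊆ Δ' → GLSeq c Γ Δ → GLSeq c Γ' Δ'
  | impL {c Γ Δ φ ψ} : GLSeq c Γ (insert φ Δ) → GLSeq c (insert ψ Γ) Δ →
      GLSeq c (insert (.imp φ ψ) Γ) Δ
  | impR {c Γ Δ φ ψ} : GLSeq c (insert φ Γ) (insert ψ Δ) → GLSeq c Γ (insert (.imp φ ψ) Δ)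
  | boxGL {c Γ φ} : GLSeq c (Γ ∪ Γ.image .box ∪ {.box φ}) {φ} → GLSeq c (Γ.image .box) {.box φ}

/-- Proof trees of GLS_seq (cut included). -/
inductive GLSTree : SeqLevel → Finset Formula → Finset Formula → Type
  | init (lv φ) : GLSTree lv {φ} {φ}
  | initBot (lv) : GLSTree lv {Formula.bot} ∅
  | cut {lv Γ Δ} (φ) : GLSTree lv Γ (insert φ Δ) → GLSTree lv (insert φ Γ) Δ → GLSTree lv Γ Δ
  | weak {lv Γ Δ} (Γ' Δ' : Finset Formula) : Γ ⊆ Γ' → Δ ⊆ Δ' → GLSTree lv Γ Δ → GLSTree lv Γ' Δ'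
  | impL {lv Γ Δ} (φ ψ) : GLSTree lv Γ (insert φ Δ) → GLSTree lv (insert ψ Γ) Δ →
      GLSTree lv (insert (.imp φ ψ) Γ) Δ
  | impR {lv Γ Δ} (φ ψ) : GLSTree lv (insert φ Γ) (insert ψ Δ) → GLSTree lv Γ (insert (.imp φ ψ) Δ)
  | boxGL (Γ φ) : GLSTree .one (Γ ∪ Γ.image .box ∪ {.box φ}) {φ} → GLSTree .one (Γ.image .box) {.box φ}
  | boxL {Γ Δ} (φ) : GLSTree .two (insert φ Γ) Δ → GLSTree .two (insert (.box φ) Γ) Δ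
  | lift {Γ Δ} : GLSTree .one Γ Δ → GLSTree .two Γ Δ

/-- The set of principal formulas of all (□L) rules occurring in a proof tree. -/
def GLSTree.principals : ∀ {lv Γ Δ}, GLSTree lv Γ Δ → Finset Formula
  | _, _, _, .init _ _ => ∅
  | _, _, _, .initBot _ => ∅
  | _, _, _, .cut _ t₁ t₂ => t₁.principals ∪ t₂.principals
  | _, _, _, .weak _ _ _ _ t => t.principals
  | _, _, _, .impL _ _ t₁ t₂ => t₁.principals ∪ t₂.principals
  | _, _, _, .impR _ _ t => t.principals
  | _, _, _, .boxGL _ _ t => t.principals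
  | _, _, _, .boxL φ t => insert (Formula.box φ) t.principals
  | _, _, _, .lift t => t.principals

/-- A proof tree bundled with its level and conclusion. -/
abbrev PGLSTree : Type :=
  (lv : SeqLevel) × (Γ : Finset Formula) × (Δ : Finset Formula) × GLSTree lv Γ Δ

/-- The set of subproofs of a proof tree (including the tree itself). -/
def GLSTree.subproofs {lv Γ Δ} (t : GLSTree lv Γ Δ) : Set PGLSTree :=
  insert ⟨lv, Γ, Δ, t⟩ <|
    match lv, Γ, Δ, t with
    | _, _, _, .init _ _ => ∅
    | _, _, _, .initBot _ => ∅
    | _, _, _, .cut _ t₁ t₂ => t₁.subproofs ∪ t₂.subproofs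
    | _, _, _, .weak _ _ _ _ t₁ => t₁.subproofs
    | _, _, _, .impL _ _ t₁ t₂ => t₁.subproofs ∪ t₂.subproofs
    | _, _, _, .impR _ _ t₁ => t₁.subproofs
    | _, _, _, .boxGL _ _ t₁ => t₁.subproofs
    | _, _, _, .boxL _ t₁ => t₁.subproofs
    | _, _, _, .lift t₁ => t₁.subproofs

/-- Kripke satisfaction over a frame `R` with atomic valuation `v`. -/
def KSat {W : Type} (R : W → W → Prop) (v : W → ℕ → Prop) : Formula → W → Prop
  | .var p, w => v w p
  | .bot, _ => False
  | .imp φ ψ, w => KSat R v φ w → KSat R v ψ w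
  | .box φ, w => ∀ w', R w w' → KSat R v φ w'

/-- A GL-model: a nonempty, transitive, converse well-founded Kripke model. -/
structure GLModel where
  World : Type
  ne : Nonempty World
  R : World → World → Prop
  trans : Transitive R
  cwf : ∀ f : ℕ → World, ¬ ∀ i, R (f i) (f (i + 1))
  val : World → ℕ → Prop

/-- Truth of a formula at a world of a GL-model. -/
def GLModel.sat (M : GLModel) (w : M.World) (φ : Formula) : Prop := KSat M.R M.val φ w

/-- Truth of a sequent Γ ▸ Δ at a world: some γ ∈ Γ is false or some δ ∈ Δ is true. -/
def GLModel.seqTrue (M : GLModel) (w : M.World) (Γ Δ : Finset Formula) : Prop :=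
  (∃ γ ∈ Γ, ¬ M.sat w γ) ∨ (∃ δ ∈ Δ, M.sat w δ)

/-- w is Σ-reflexive: □α → α is true at w for every □α ∈ Σ. -/
def GLModel.reflexiveFor (M : GLModel) (w : M.World) (S : Finset Formula) : Prop :=
  ∀ α : Formula, Formula.box α ∈ S → M.sat w ((Formula.box α).imp α)

/-- Saturation conditions (→L), (→R) for first-level sequents. -/
def Saturated1 (Γ Δ : Finset Formula) : Prop :=
  (∀ φ ψ : Formula, φ.imp ψ ∈ Γ → φ ∈ Δ ∨ ψ ∈ Γ) ∧
  (∀ φ ψ : Formula, φ.imp ψ ∈ Δ → φ ∈ Γ ∧ ψ ∈ Δ)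

/-- Saturation for second-level sequents: additionally (□L). -/
def Saturated2 (Γ Δ : Finset Formula) : Prop :=
  Saturated1 Γ Δ ∧ ∀ φ : Formula, Formula.box φ ∈ Γ → φ ∈ Γ

def Saturated : SeqLevel → Finset Formula → Finset Formula → Prop
  | .one => Saturated1
  | .two => Saturated2

/-- The Hilbert system GL. -/
inductive GLHilbert : Formula → Prop
  | ax1 (φ ψ : Formula) : GLHilbert (φ.imp (ψ.imp φ))
  | ax2 (φ ψ χ : Formula) :
      GLHilbert ((φ.imp (ψ.imp χ)).imp ((φ.imp ψ).imp (φ.imp χ)))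
  | ax3 (φ : Formula) : GLHilbert (((φ.imp .bot).imp .bot).imp φ)
  | axK (φ ψ : Formula) :
      GLHilbert ((Formula.box (φ.imp ψ)).imp ((Formula.box φ).imp (Formula.box ψ)))
  | axLob (φ : Formula) :
      GLHilbert ((Formula.box ((Formula.box φ).imp φ)).imp (Formula.box φ))
  | mp {φ ψ} : GLHilbert (φ.imp ψ) → GLHilbert φ → GLHilbert ψ
  | nec {φ} : GLHilbert φ → GLHilbert (Formula.box φ)

/-- The Hilbert system GLS: theorems of GL and all □α → α, closed under modus ponens. -/
inductive GLSHilbert : Formula → Prop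
  | gl {φ} : GLHilbert φ → GLSHilbert φ
  | refl (α : Formula) : GLSHilbert ((Formula.box α).imp α)
  | mp {φ ψ} : GLSHilbert (φ.imp ψ) → GLSHilbert φ → GLSHilbert ψ

/-- Conjunction (encoded with → and ⊥) of a list of formulas; empty conjunction is ⊤. -/
def Formula.conj : List Formula → Formula
  | [] => Formula.bot.imp Formula.bot
  | φ :: l => ((φ.imp ((Formula.conj l).imp .bot)).imp .bot)

/-- Membership predicate for the canonical model: saturated first-level sequents over S
that are not cut-free provable in GLS_seq. -/
def W0pred (S : Finset Formula) (s : Finset Formula × Finset Formula) : Prop :=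
  Saturated1 s.1 s.2 ∧ ¬ GLSSeq false SeqLevel.one s.1 s.2 ∧ s.1 ∪ s.2 ⊆ S

/-- Worlds of the canonical model. -/
def W0 (S : Finset Formula) : Type := {s : Finset Formula × Finset Formula // W0pred S s}

/-- Accessibility of the canonical model: (Γ⇒Δ) R₀ (Γ'⇒Δ') iff Γ_□ ⊊ Γ'_□ and Γ_□ ⊆ Γ'. -/
def R0 (S : Finset Formula) (s t : W0 S) : Prop :=
  boxInv s.1.1 ⊂ boxInv t.1.1 ∧ boxInv s.1.1 ⊆ t.1.1

/-- Valuation of the canonical model: p is true at (Γ⇒Δ) iff p ∈ Γ. -/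
def V0 (S : Finset Formula) (s : W0 S) (p : ℕ) : Prop := Formula.var p ∈ s.1.1

/-- The extended set of worlds W = W₀ ∪ ℕ. -/
def Wext (S : Finset Formula) : Type := W0 S ⊕ ℕ

/-- The extended accessibility relation, with distinguished world `wp` in W₀. -/
def Rext (S : Finset Formula) (wp : W0 S) : Wext S → Wext S → Prop
  | Sum.inl x, Sum.inl y => R0 S x y
  | Sum.inr _, Sum.inl y => y = wp ∨ R0 S wp y
  | Sum.inr n, Sum.inr m => m < n
  | Sum.inl _, Sum.inr _ => False

/-- The extended valuation: worlds in ℕ behave like the distinguished world `wp`. -/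
def Vext (S : Finset Formula) (wp : W0 S) : Wext S → ℕ → Prop
  | Sum.inl x, p => V0 S x p
  | Sum.inr _, p => V0 S wp p
lemma exists_maximal {W : Type} (R : W → W → Prop)
    (cwf : ∀ f : ℕ → W, ¬ ∀ i, R (f i) (f (i + 1)))
    (X : W → Prop) (u : W) (hu : X u) :
    ∃ v, X v ∧ ∀ v', R v v' → ¬ X v' := by
  by_contra h
  push_neg at h
  have step : ∀ v : {v // X v}, {v' : {v // X v} // R v.1 v'.1} := by
    intro v
    exact ⟨⟨(h v.1 v.2).choose, (h v.1 v.2).choose_spec.2⟩, (h v.1 v.2).choose_spec.1⟩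
  let f : ℕ → {v // X v} := fun n => Nat.rec ⟨u, hu⟩ (fun _ v => (step v).1) n
  exact cwf (fun n => (f n).1) (fun i => (step (f i)).2)

lemma sound_aux : ∀ {lv Γ Δ} (t : GLSTree lv Γ Δ) (S : Finset Formula),
    t.principals ⊆ S → ∀ (M : GLModel) (w : M.World),
    (lv = .two → M.reflexiveFor w S) → M.seqTrue w Γ Δ := by
  intro lv Γ Δ t
  induction t with
  | init lv φ =>
    intro S _ M w _
    by_cases h : M.sat w φ
    · exact Or.inr ⟨φ, Finset.mem_singleton_self φ, h⟩
    · exact Or.inl ⟨φ, Finset.mem_singleton_self φ, h⟩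
  | initBot lv =>
    intro S _ M w _
    exact Or.inl ⟨.bot, Finset.mem_singleton_self _, fun h => h⟩
  | cut φ t₁ t₂ ih₁ ih₂ =>
    intro S hS M w hw
    simp only [GLSTree.principals, Finset.union_subset_iff] at hS
    by_cases h : M.sat w φ
    · rcases ih₂ S hS.2 M w hw with ⟨γ, hγ, hγ'⟩ | hd
      · rcases Finset.mem_insert.1 hγ with rfl | hγ
        · exact absurd h hγ'
        · exact Or.inl ⟨γ, hγ, hγ'⟩
      · exact Or.inr hd
    · rcases ih₁ S hS.1 M w hw with hg | ⟨δ, hδ, hδ'⟩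
      · exact Or.inl hg
      · rcases Finset.mem_insert.1 hδ with rfl | hδ
        · exact absurd hδ' h
        · exact Or.inr ⟨δ, hδ, hδ'⟩
  | weak Γ' Δ' hΓ hΔ t ih =>
    intro S hS M w hw
    rcases ih S hS M w hw with ⟨γ, hγ, hγ'⟩ | ⟨δ, hδ, hδ'⟩
    · exact Or.inl ⟨γ, hΓ hγ, hγ'⟩
    · exact Or.inr ⟨δ, hΔ hδ, hδ'⟩
  | impL φ ψ t₁ t₂ ih₁ ih₂ =>
    intro S hS M w hw
    simp only [GLSTree.principals, Finset.union_subset_iff] at hS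
    by_cases h : M.sat w (φ.imp ψ)
    · by_cases hφ : M.sat w φ
      · rcases ih₂ S hS.2 M w hw with ⟨γ, hγ, hγ'⟩ | hd
        · rcases Finset.mem_insert.1 hγ with rfl | hγ
          · exact absurd (h hφ) hγ'
          · exact Or.inl ⟨γ, Finset.mem_insert_of_mem hγ, hγ'⟩
        · exact Or.inr hd
      · rcases ih₁ S hS.1 M w hw with ⟨γ, hγ, hγ'⟩ | ⟨δ, hδ, hδ'⟩
        · exact Or.inl ⟨γ, Finset.mem_insert_of_mem hγ, hγ'⟩
        · rcases Finset.mem_insert.1 hδ with rfl | hδ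
          · exact absurd hδ' hφ
          · exact Or.inr ⟨δ, hδ, hδ'⟩
    · exact Or.inl ⟨φ.imp ψ, Finset.mem_insert_self _ _, h⟩
  | impR φ ψ t ih =>
    intro S hS M w hw
    by_cases h : M.sat w (φ.imp ψ)
    · exact Or.inr ⟨φ.imp ψ, Finset.mem_insert_self _ _, h⟩
    · have hφ : M.sat w φ ∧ ¬ M.sat w ψ := by
        by_contra hc
        exact h (fun hp => by
          by_cases hψ : M.sat w ψ
          · exact hψ
          · exact absurd ⟨hp, hψ⟩ hc)
      rcases ih S hS M w hw with ⟨γ, hγ, hγ'⟩ | ⟨δ, hδ, hδ'⟩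
      · rcases Finset.mem_insert.1 hγ with rfl | hγ
        · exact absurd hφ.1 hγ'
        · exact Or.inl ⟨γ, hγ, hγ'⟩
      · rcases Finset.mem_insert.1 hδ with rfl | hδ
        · exact absurd hδ' hφ.2
        · exact Or.inr ⟨δ, Finset.mem_insert_of_mem hδ, hδ'⟩
  | boxGL Γ' φ t ih =>
    intro S hS M w _
    by_cases hall : ∀ γ ∈ Γ'.image Formula.box, M.sat w γ
    · right
      refine ⟨.box φ, Finset.mem_singleton_self _, ?_⟩
      by_contra hbox
      have : ∃ u, M.R w u ∧ ¬ M.sat u φ := by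
        by_contra hc
        push_neg at hc
        exact hbox (fun w' hw' => hc w' hw')
      obtain ⟨u, hu⟩ := this
      obtain ⟨v, hv, hmax⟩ := exists_maximal M.R M.cwf
        (fun x => M.R w x ∧ ¬ M.sat x φ) u hu
      rcases ih S hS M v (fun h => nomatch h) with ⟨γ, hγ, hγ'⟩ | ⟨δ, hδ, hδ'⟩
      · exfalso
        apply hγ'
        rcases Finset.mem_union.1 hγ with hγ | hγ
        · rcases Finset.mem_union.1 hγ with hγ | hγ
          · -- γ ∈ Γ' : □γ true at w, R w v
            exact hall (Formula.box γ) (Finset.mem_image_of_mem _ hγ) v hv.1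
          · -- γ ∈ image box : γ = □γ₀
            obtain ⟨γ₀, hγ₀, rfl⟩ := Finset.mem_image.1 hγ
            intro v' hvv'
            exact hall (Formula.box γ₀) (Finset.mem_image_of_mem _ hγ₀) v'
              (M.trans hv.1 hvv')
        · -- γ = □φ
          rw [Finset.mem_singleton.1 hγ]
          intro v' hvv'
          by_contra hsat
          exact hmax v' hvv' ⟨M.trans hv.1 hvv', hsat⟩
      · exact hv.2 (Finset.mem_singleton.1 hδ ▸ hδ')
    · push_neg at hall
      obtain ⟨γ, hγ, hγ'⟩ := hall
      exact Or.inl ⟨γ, hγ, hγ'⟩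
  | boxL φ t ih =>
    intro S hS M w hw
    simp only [GLSTree.principals, Finset.insert_subset_iff] at hS
    by_cases h : M.sat w (Formula.box φ)
    · have hφ : M.sat w φ := hw rfl φ hS.1 h
      rcases ih S hS.2 M w hw with ⟨γ, hγ, hγ'⟩ | hd
      · rcases Finset.mem_insert.1 hγ with rfl | hγ
        · exact absurd hφ hγ'
        · exact Or.inl ⟨γ, Finset.mem_insert_of_mem hγ, hγ'⟩
      · exact Or.inr hd
    · exact Or.inl ⟨Formula.box φ, Finset.mem_insert_self _ _, h⟩
  | lift t ih =>
    intro S hS M w _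
    exact ih S hS M w (fun h => nomatch h)

lemma principals_subset : ∀ {lv Γ Δ} (t : GLSTree lv Γ Δ) (p : PGLSTree),
    p ∈ t.subproofs → p.2.2.2.principals ⊆ t.principals := by
  intro lv Γ Δ t
  induction t with
  | init lv φ =>
    intro p hp
    rw [GLSTree.subproofs] at hp
    rcases hp with rfl | hp
    · exact subset_rfl
    · exact absurd hp (Set.notMem_empty _)
  | initBot lv =>
    intro p hp
    rw [GLSTree.subproofs] at hp
    rcases hp with rfl | hp
    · exact subset_rfl
    · exact absurd hp (Set.notMem_empty _)
  | cut φ t₁ t₂ ih₁ ih₂ =>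
    intro p hp
    rw [GLSTree.subproofs] at hp
    rcases hp with rfl | hp | hp
    · exact subset_rfl
    · exact (ih₁ p hp).trans Finset.subset_union_left
    · exact (ih₂ p hp).trans Finset.subset_union_right
  | weak Γ' Δ' hΓ hΔ t ih =>
    intro p hp
    rw [GLSTree.subproofs] at hp
    rcases hp with rfl | hp
    · exact subset_rfl
    · exact ih p hp
  | impL φ ψ t₁ t₂ ih₁ ih₂ =>
    intro p hp
    rw [GLSTree.subproofs] at hp
    rcases hp with rfl | hp | hp
    · exact subset_rfl
    · exact (ih₁ p hp).trans Finset.subset_union_left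
    · exact (ih₂ p hp).trans Finset.subset_union_right
  | impR φ ψ t ih =>
    intro p hp
    rw [GLSTree.subproofs] at hp
    rcases hp with rfl | hp
    · exact subset_rfl
    · exact ih p hp
  | boxGL Γ' φ t ih =>
    intro p hp
    rw [GLSTree.subproofs] at hp
    rcases hp with rfl | hp
    · exact subset_rfl
    · exact ih p hp
  | boxL φ t ih =>
    intro p hp
    rw [GLSTree.subproofs] at hp
    rcases hp with rfl | hp
    · exact subset_rfl
    · exact (ih p hp).trans (Finset.subset_insert _ _)
  | lift t ih =>
    intro p hp
    rw [GLSTree.subproofs] at hp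
    rcases hp with rfl | hp
    · exact subset_rfl
    · exact ih p hp

/-- The inductive invariant of the soundness proof: if Σ is the set of principal
formulas of all (□L) rules of a GLS_seq-proof P, then every subproof P' of P with
first-level conclusion Γ ⇒ Δ yields a sequent true at every world of every GL-model,
and every subproof P' of P with second-level conclusion Γ ⇛ Δ yields a sequent true
at every Σ-reflexive world of every GL-model. -/
theorem gls_soundness_invariant (lv : SeqLevel) (Ψ Φ : Finset Formula)
    (P : GLSTree lv Ψ Φ) (lv' : SeqLevel) (Γ Δ : Finset Formula) (P' : GLSTree lv' Γ Δ)
    (hsub : (⟨lv', Γ, Δ, P'⟩ : PGLSTree) ∈ P.subproofs) :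
    (lv' = SeqLevel.one → ∀ (M : GLModel) (w : M.World), M.seqTrue w Γ Δ) ∧
    (lv' = SeqLevel.two → ∀ (M : GLModel) (w : M.World),
        M.reflexiveFor w P.principals → M.seqTrue w Γ Δ) := by
  have hsub' : P'.principals ⊆ P.principals :=
    principals_subset P ⟨lv', Γ, Δ, P'⟩ hsub
  constructor
  · rintro rfl M w
    exact sound_aux P' P.principals hsub' M w (fun h => nomatch h)
  · rintro rfl M w hw
    exact sound_aux P' P.principals hsub' M w (fun _ => hw)
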